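/- Let $z,w\in\mathbb{C}$ with $|z|^2\ge 1+\delta$ and $|w|^2\ge 1+\delta$ for some $\delta>0$, and let $\widehat\beta,\widehat\beta_* = 1-u_z u_w\operatorname{Re}(z\bar w) \pm \sqrt{m_z^2 m_w^2 - u_z^2 u_w^2(\operatorname{Im}(z\bar w))^2}$, where $m_z,u_z,m_w,u_w$ are the solutions of the scalar Dyson equations at spectral parameter $\mathrm{i}\eta$. Then $\widehat\beta\,\widehat\beta_* = |u_z u_w z\bar w - 1|^2 - m_z^2 m_w^2$, and there exist $c(\delta)>0$ and $\eta_0(\delta)>0$ such that $\widehat\beta\,\widehat\beta_* \ge c(\delta)$ for all $0<\eta\le\eta_0$. -/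

import Mathlib

/-!
For `|z|² ≥ 1` the Dyson equation at `iη` forces `m_z = i t` with `t ((t + η)² + |z|² - 1) = η`.
Hence `u_z = t / (t + η)` is real with `u_z |z|² ≤ 1`, and `t δ ≤ η`. As `u_z u_w` is real, the
eigenvalue product is `|u_z u_w z w̄ - 1|² - t_z² t_w²`, and
`u_z u_w |z w̄| ≤ 1 / (|z| |w|) ≤ 1 / (1 + δ)` bounds it below by `(δ / (1 + δ))² - (η / δ)⁴`.
-/

open Complex ComplexConjugate

section Dyson

variable {η s : ℝ} {m : ℂ}

theorem dyson_cubic_eq_zero (hη : 0 < η) (hm : 0 < m.im)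
    (h : -(1 / m) = I * η + m - s / (I * η + m)) :
    m ^ 3 + 2 * I * η * m ^ 2 + (1 - η ^ 2 - s) * m + I * η = 0 := by
  have hm0 : m ≠ 0 := fun h => by simp [h] at hm
  have hd : I * η + m ≠ 0 := fun h => by
    have := congrArg im h
    simp at this
    linarith
  field_simp at h
  linear_combination -h - m * η ^ 2 * I_sq

/-- Writing `m = a + ib`, a nonzero `a` would force `a² = 3b² + 4ηb + η² + s - 1`, which makes the
imaginary part of the cubic a sum of positive terms. -/
theorem re_eq_zero_and_im_mul_eq_of_dyson_cubic (hη : 0 < η) (hs : 1 ≤ s)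
    (hm : 0 < m.im) (h : m ^ 3 + 2 * I * η * m ^ 2 + (1 - η ^ 2 - s) * m + I * η = 0) :
    m.re = 0 ∧ m.im * ((m.im + η) ^ 2 + s - 1) = η := by
  obtain ⟨a, b⟩ := m
  have hre := congrArg re h
  have him := congrArg im h
  simp only [pow_succ, pow_zero, one_mul, add_re, add_im, mul_re, mul_im, sub_re, sub_im, I_re,
    I_im, ofReal_re, ofReal_im, one_re, one_im, zero_re, zero_im, re_ofNat, im_ofNat] at hre him hm ⊢
  have ha : a = 0 := by
    by_contra ha
    have hsq : a ^ 2 = 3 * b ^ 2 + 4 * η * b + η ^ 2 + s - 1 := by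
      have := (mul_eq_zero.mp (by linear_combination hre :
        a * (a ^ 2 - 3 * b ^ 2 - 4 * η * b + 1 - η ^ 2 - s) = 0)).resolve_left ha
      linarith
    have : 8 * b ^ 3 + 16 * η * b ^ 2 + 10 * η ^ 2 * b + 2 * (s - 1) * (b + η) + 2 * η ^ 3 + η
        = 0 := by
      linear_combination him - (3 * b + 2 * η) * hsq
    nlinarith [mul_nonneg (sub_nonneg.2 hs) (by linarith : 0 ≤ b + η)]
  subst ha
  refine ⟨rfl, ?_⟩
  linear_combination -him

theorem exists_eq_I_mul_of_dyson (hη : 0 < η) (hs : 1 ≤ s) (hm : 0 < m.im)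
    (h : -(1 / m) = I * η + m - s / (I * η + m)) :
    ∃ t : ℝ, 0 < t ∧ m = I * t ∧ t * ((t + η) ^ 2 + s - 1) = η := by
  obtain ⟨hre, him⟩ :=
    re_eq_zero_and_im_mul_eq_of_dyson_cubic hη hs hm (dyson_cubic_eq_zero hη hm h)
  exact ⟨m.im, hm, ext (by simp [hre]) (by simp), him⟩

end Dyson

theorem I_mul_div_I_mul_add (t η : ℝ) :
    I * t / (I * η + I * t) = ((t / (t + η) : ℝ) : ℂ) := by
  rw [← mul_add, mul_div_mul_left _ _ I_ne_zero, add_comm]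
  push_cast
  rfl

theorem mul_sub_one_le_of_dyson {t η s : ℝ} (ht : 0 < t) (h : t * ((t + η) ^ 2 + s - 1) = η) :
    t * (s - 1) ≤ η := by
  nlinarith [mul_nonneg ht.le (sq_nonneg (t + η))]

theorem div_add_mul_le_one {t η s : ℝ} (hη : 0 < t + η) (h : t * (s - 1) ≤ η) :
    t / (t + η) * s ≤ 1 := by
  rw [div_mul_eq_mul_div, div_le_one hη]
  linarith

theorem sq_one_sub_mul_re_conj_sub (a b : ℝ) (z w M : ℂ) :
    (1 - a * b * ((z * conj w).re : ℂ)) ^ 2 - (M - a ^ 2 * b ^ 2 * ((z * conj w).im : ℂ) ^ 2) =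
      (‖a * b * z * conj w - 1‖ : ℂ) ^ 2 - M := by
  have h : ‖(a : ℂ) * b * z * conj w - 1‖ ^ 2 =
      (a * b * (z * conj w).re - 1) ^ 2 + (a * b * (z * conj w).im) ^ 2 := by
    rw [Complex.sq_norm, normSq_apply, mul_assoc _ z, ← ofReal_mul]
    simp only [sub_re, sub_im, re_ofReal_mul, im_ofReal_mul, one_re, one_im]
    ring
  rw [show (‖(a : ℂ) * b * z * conj w - 1‖ : ℂ) ^ 2 =
    ((‖(a : ℂ) * b * z * conj w - 1‖ ^ 2 : ℝ) : ℂ) by push_cast; rfl, h]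
  push_cast
  ring

theorem div_one_add_le_norm_mul_sub_one {δ p q : ℝ} {z w : ℂ} (hδ : 0 < δ) (hp : 0 ≤ p)
    (hq : 0 ≤ q) (hz : 1 + δ ≤ ‖z‖ ^ 2) (hw : 1 + δ ≤ ‖w‖ ^ 2) (hpz : p * ‖z‖ ^ 2 ≤ 1)
    (hqw : q * ‖w‖ ^ 2 ≤ 1) : δ / (1 + δ) ≤ ‖(p : ℂ) * q * z * conj w - 1‖ := by
  have hzw : 1 + δ ≤ ‖z‖ * ‖w‖ := by
    refine le_of_sq_le_sq ?_ (by positivity)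
    nlinarith
  have hpq : p * q * ‖z‖ * ‖w‖ * (1 + δ) ≤ 1 :=
    calc p * q * ‖z‖ * ‖w‖ * (1 + δ)
        ≤ p * q * ‖z‖ * ‖w‖ * (‖z‖ * ‖w‖) := by gcongr
      _ = (p * ‖z‖ ^ 2) * (q * ‖w‖ ^ 2) := by ring
      _ ≤ 1 := mul_le_one₀ hpz (by positivity) hqw
  calc δ / (1 + δ) = 1 - 1 / (1 + δ) := by field_simp; ring
    _ ≤ 1 - ‖(p : ℂ) * q * z * conj w‖ := by
      rw [norm_mul, norm_mul, norm_mul, Complex.norm_conj, norm_real, norm_real,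
        Real.norm_of_nonneg hp, Real.norm_of_nonneg hq]
      gcongr
      rw [le_div_iff₀ (by positivity)]
      linarith
    _ ≤ ‖(p : ℂ) * q * z * conj w - 1‖ := by
      simpa [norm_sub_rev] using norm_sub_norm_le (1 : ℂ) ((p : ℂ) * q * z * conj w)

/-- Stability of the two-body operator outside the disk: the product of the nontrivial
eigenvalues `β̂ β̂_* = (1 - u_z u_w Re(z w̄))² - (m_z² m_w² - u_z² u_w² (Im(z w̄))²)`
equals `|u_z u_w z w̄ - 1|² - m_z² m_w²`, and is bounded below by a constant `c(δ) > 0`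
for all sufficiently small `η`, whenever `|z|², |w|² ≥ 1 + δ`. -/
theorem stmt_9 (δ : ℝ) (hδ : 0 < δ) :
    ∃ c > (0 : ℝ), ∃ η₀ > (0 : ℝ), ∀ (η : ℝ), 0 < η → η ≤ η₀ →
      ∀ (z w mz uz mw uw : ℂ),
        1 + δ ≤ ‖z‖ ^ 2 → 1 + δ ≤ ‖w‖ ^ 2 →
        0 < mz.im →
        -(1 / mz) = Complex.I * η + mz - (‖z‖ : ℂ) ^ 2 / (Complex.I * η + mz) →
        uz = mz / (Complex.I * η + mz) →
        0 < mw.im →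
        -(1 / mw) = Complex.I * η + mw - (‖w‖ : ℂ) ^ 2 / (Complex.I * η + mw) →
        uw = mw / (Complex.I * η + mw) →
        (1 - uz * uw * ((z * (starRingEnd ℂ) w).re : ℂ)) ^ 2 -
            (mz ^ 2 * mw ^ 2 - uz ^ 2 * uw ^ 2 * ((z * (starRingEnd ℂ) w).im : ℂ) ^ 2) =
          (‖uz * uw * z * (starRingEnd ℂ) w - 1‖ : ℂ) ^ 2 - mz ^ 2 * mw ^ 2 ∧
        c ≤ ((1 - uz * uw * ((z * (starRingEnd ℂ) w).re : ℂ)) ^ 2 -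
            (mz ^ 2 * mw ^ 2 - uz ^ 2 * uw ^ 2 * ((z * (starRingEnd ℂ) w).im : ℂ) ^ 2)).re := by
  set ε := δ / (1 + δ)
  have hε : ε ≤ 1 := (div_le_one (by positivity)).2 (by linarith)
  refine ⟨ε ^ 2 / 2, by positivity, δ * ε / 2, by positivity, ?_⟩
  intro η hη hη₀ z w mz uz mw uw hz hw hmz hmz_eq huz hmw hmw_eq huw
  obtain ⟨t, ht, rfl, hteq⟩ :=
    exists_eq_I_mul_of_dyson (s := ‖z‖ ^ 2) hη (by linarith) hmz (by push_cast; exact hmz_eq)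
  obtain ⟨t', ht', rfl, ht'eq⟩ :=
    exists_eq_I_mul_of_dyson (s := ‖w‖ ^ 2) hη (by linarith) hmw (by push_cast; exact hmw_eq)
  rw [I_mul_div_I_mul_add] at huz huw
  subst huz huw
  refine ⟨sq_one_sub_mul_re_conj_sub _ _ _ _ _, ?_⟩
  have hM : (I * t) ^ 2 * (I * t') ^ 2 = (((t * t') ^ 2 : ℝ) : ℂ) := by
    push_cast
    linear_combination (t ^ 2 * t' ^ 2 * (I ^ 2 - 1)) * I_sq
  rw [sq_one_sub_mul_re_conj_sub, hM, ← ofReal_pow, ← ofReal_sub, ofReal_re]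
  have htη := mul_sub_one_le_of_dyson ht hteq
  have ht'η := mul_sub_one_le_of_dyson ht' ht'eq
  have hlower := div_one_add_le_norm_mul_sub_one hδ (by positivity) (by positivity) hz hw
    (div_add_mul_le_one (by positivity) htη) (div_add_mul_le_one (by positivity) ht'η)
  have hts : t ≤ ε / 2 := le_of_mul_le_mul_right (by nlinarith) hδ
  have ht's : t' ≤ ε / 2 := le_of_mul_le_mul_right (by nlinarith) hδ
  have htt' : (t * t') ^ 2 ≤ ε ^ 2 / 2 := by
    have := pow_le_pow_left₀ (by positivity) (mul_le_mul hts ht's ht'.le (by positivity)) 2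
    nlinarith [pow_le_one₀ (by positivity) hε (n := 2)]
  nlinarith [pow_le_pow_left₀ (by positivity) hlower 2]
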